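/- arXiv:2203.01551 — 5 statements merged into one kernel-verified Lean document; each statement's English description precedes it below -/
import Mathlib

section
/- Let f : ℝⁿ → ℝ be a C² function such that f(x) → l as |x| → ∞ for some real l, and such that the second partial derivative ∂²f/∂x₁² is uniformly bounded on ℝⁿ. Then ∂f/∂x₁(x) → 0 as |x| → ∞. -/
open Filter

/-- If `f : ℝⁿ → ℝ` is `C²`, tends to a limit `l` at infinity, and its second
partial derivative in the first coordinate direction is uniformly bounded, then
its first partial derivative in that direction tends to `0` at infinity. -/
theorem stmt0 (n : ℕ) (hn : 0 < n) (f : EuclideanSpace ℝ (Fin n) → ℝ) (l : ℝ)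
    (hf : ContDiff ℝ 2 f)
    (hlim : Tendsto f (cocompact (EuclideanSpace ℝ (Fin n))) (nhds l))
    (c : ℝ) (hc : 0 < c)
    (hbound : ∀ x,
      |fderiv ℝ (fun y => fderiv ℝ f y (EuclideanSpace.single ⟨0, hn⟩ 1)) x
        (EuclideanSpace.single ⟨0, hn⟩ 1)| ≤ c) :
    Tendsto (fun x => fderiv ℝ f x (EuclideanSpace.single ⟨0, hn⟩ 1))
      (cocompact (EuclideanSpace ℝ (Fin n))) (nhds 0) := by
  set e : EuclideanSpace ℝ (Fin n) := EuclideanSpace.single ⟨0, hn⟩ 1 with he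
  have hne : ‖e‖ = 1 := by simp [he]
  set g : EuclideanSpace ℝ (Fin n) → ℝ := fun y => fderiv ℝ f y e with hg
  have hfd : Differentiable ℝ f := hf.differentiable (by norm_num)
  have hdf : Differentiable ℝ (fderiv ℝ f) :=
    (hf.fderiv_right (m := 1) (by norm_num)).differentiable (by norm_num)
  have hgd : Differentiable ℝ g := fun x =>
    (hdf x).clm_apply (differentiableAt_const e)
  -- derivative of g along line
  have hline : ∀ (x : EuclideanSpace ℝ (Fin n)) (t : ℝ),
      HasDerivAt (fun s : ℝ => x + s • e) e t := by
    intro x t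
    simpa using ((hasDerivAt_id t).smul_const e).const_add x
  have hglip : ∀ (x : EuclideanSpace ℝ (Fin n)) (t : ℝ),
      |g (x + t • e) - g x| ≤ c * |t| := by
    intro x t
    have hchi : ∀ s : ℝ, HasDerivAt (fun s => g (x + s • e))
        (fderiv ℝ g (x + s • e) e) s := fun s =>
      by have := ((hgd (x + s • e)).hasFDerivAt).comp_hasDerivAt s (hline x s); exact this
    have := Convex.norm_image_sub_le_of_norm_hasDerivWithin_le
      (f := fun s => g (x + s • e)) (f' := fun s => fderiv ℝ g (x + s • e) e)
      (s := Set.univ) (C := c)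
      (fun s _ => (hchi s).hasDerivWithinAt)
      (fun s _ => by simpa [Real.norm_eq_abs] using hbound (x + s • e))
      convex_univ (Set.mem_univ 0) (Set.mem_univ t)
    simpa [Real.norm_eq_abs] using this
  -- key estimate
  have hkey : ∀ (x : EuclideanSpace ℝ (Fin n)) (T : ℝ), 0 ≤ T →
      |g x| * T - c * T ^ 2 ≤ |f (x + T • e) - f x| := by
    intro x T hT
    have hpsi : ∀ s : ℝ, HasDerivAt (fun s => f (x + s • e) - g x * s)
        (g (x + s • e) - g x) s := by
      intro s
      have h1 : HasDerivAt (fun s : ℝ => f (x + s • e)) (g (x + s • e)) s :=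
        ((hfd (x + s • e)).hasFDerivAt).comp_hasDerivAt s (hline x s)
      have h2 := h1.sub ((hasDerivAt_id' s).const_mul (g x))
      rw [mul_one] at h2
      exact h2
    have hb : ∀ s ∈ Set.Icc (0:ℝ) T, ‖g (x + s • e) - g x‖ ≤ c * T := by
      intro s hs
      calc ‖g (x + s • e) - g x‖ ≤ c * |s| := hglip x s
        _ ≤ c * T := by
            rw [abs_of_nonneg hs.1]
            exact mul_le_mul_of_nonneg_left hs.2 hc.le
    have := Convex.norm_image_sub_le_of_norm_hasDerivWithin_le
      (f := fun s => f (x + s • e) - g x * s)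
      (f' := fun s => g (x + s • e) - g x) (s := Set.Icc 0 T) (C := c * T)
      (fun s _ => (hpsi s).hasDerivWithinAt) hb (convex_Icc 0 T)
      (Set.left_mem_Icc.2 hT) (Set.right_mem_Icc.2 hT)
    simp only [Real.norm_eq_abs, zero_smul, add_zero, mul_zero, sub_zero] at this
    have h2 : |f (x + T • e) - g x * T - f x| ≤ c * T ^ 2 := by
      calc |f (x + T • e) - g x * T - f x| ≤ c * T * |T| := by
            convert this using 2
        _ = c * T ^ 2 := by rw [abs_of_nonneg hT]; ring
    have h3 : |g x * T| - |f (x + T • e) - f x| ≤ c * T ^ 2 := by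
      calc |g x * T| - |f (x + T • e) - f x|
          ≤ |g x * T - (f (x + T • e) - f x)| := abs_sub_abs_le_abs_sub _ _
        _ = |f (x + T • e) - g x * T - f x| := by rw [← abs_neg]; ring_nf
        _ ≤ c * T ^ 2 := h2
    have : |g x| * T = |g x * T| := by
      rw [abs_mul, abs_of_nonneg hT]
    linarith
  -- conclude
  rw [← Metric.cobounded_eq_cocompact] at hlim ⊢
  rw [Metric.tendsto_nhds]
  intro ε hε
  set T : ℝ := ε / (2 * c) with hT
  have hTpos : 0 < T := by positivity
  have hδ : (0:ℝ) < ε ^ 2 / (8 * c) := by positivity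
  have := (Metric.tendsto_nhds.1 hlim) _ hδ
  rw [(Metric.hasBasis_cobounded_compl_closedBall (0 : EuclideanSpace ℝ (Fin n))).eventually_iff]
    at this ⊢
  obtain ⟨R, -, hR⟩ := this
  refine ⟨max R 0 + T, trivial, fun x hx => ?_⟩
  simp only [Set.mem_compl_iff, Metric.mem_closedBall, dist_zero_right, not_le] at hx
  by_contra hcon
  rw [Real.dist_eq, sub_zero, not_lt] at hcon
  have hxR : R < ‖x‖ := lt_of_le_of_lt (le_max_left R 0) (by nlinarith [le_max_right R 0])
  have hx2R : R < ‖x + T • e‖ := by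
    have h0 : ‖x‖ ≤ ‖x + T • e‖ + ‖T • e‖ := by
      simpa using norm_add_le (x + T • e) (-(T • e))
    rw [norm_smul, hne, Real.norm_eq_abs, abs_of_nonneg hTpos.le, mul_one] at h0
    have : ‖x‖ - T ≤ ‖x + T • e‖ := by linarith
    nlinarith [le_max_left R 0, le_max_right R 0]
  have hf1 : dist (f x) l < ε ^ 2 / (8 * c) := hR (by
    simp only [Set.mem_compl_iff, Metric.mem_closedBall, dist_zero_right, not_le]; exact hxR)
  have hf2 : dist (f (x + T • e)) l < ε ^ 2 / (8 * c) := hR (by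
    simp only [Set.mem_compl_iff, Metric.mem_closedBall, dist_zero_right, not_le]; exact hx2R)
  have hfd2 : |f (x + T • e) - f x| < ε ^ 2 / (4 * c) := by
    rw [Real.dist_eq] at hf1 hf2
    calc |f (x + T • e) - f x| ≤ |f (x + T • e) - l| + |f x - l| := by
          have h := abs_sub_le (f (x + T • e)) l (f x)
          rwa [abs_sub_comm l (f x)] at h
      _ < ε ^ 2 / (4 * c) := by
          have h4 : ε ^ 2 / (8 * c) + ε ^ 2 / (8 * c) = ε ^ 2 / (4 * c) := by ring
          linarith
  have hk := hkey x T hTpos.le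
  have hcT : c * T ^ 2 = ε ^ 2 / (4 * c) := by
    rw [hT]; field_simp; ring
  have : ε * T - c * T ^ 2 ≤ |f (x + T • e) - f x| := by
    have : ε * T ≤ |g x| * T := mul_le_mul_of_nonneg_right hcon hTpos.le
    linarith
  have hεT : ε * T = ε ^ 2 / (2 * c) := by rw [hT]; field_simp
  have hid : ε ^ 2 / (2 * c) - ε ^ 2 / (4 * c) = ε ^ 2 / (4 * c) := by ring
  linarith
end

section
/- Let d ≥ 2 and k ≥ 2 be integers. With ξ_h and η_{iℓ} as defined from angles 2π(h-1)/k and 2π(ℓ-1)/k - 2π(i-1)/(dk) on the unit circle, the minimum of |ξ_h - η_{iℓ}| over i ∈ {2,…,d} and h, ℓ ∈ {1,…,k} equals |ξ₁ - η_{21}| = 2 sin(π/(dk)). -/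
open Real

lemma dist_exp_mul_I (a b : ℝ) :
    dist (Complex.exp ((a : ℂ) * Complex.I)) (Complex.exp ((b : ℂ) * Complex.I))
      = 2 * |Real.sin ((a - b) / 2)| := by
  have hre : (Complex.exp ((a : ℂ) * Complex.I) - Complex.exp ((b : ℂ) * Complex.I)).re
      = Real.cos a - Real.cos b := by
    simp [Complex.sub_re, Complex.exp_ofReal_mul_I_re]
  have him : (Complex.exp ((a : ℂ) * Complex.I) - Complex.exp ((b : ℂ) * Complex.I)).im
      = Real.sin a - Real.sin b := by
    simp [Complex.sub_im, Complex.exp_ofReal_mul_I_im]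
  rw [Complex.dist_eq, Complex.norm_def, Complex.normSq_apply, hre, him,
    Real.abs_sin_half]
  have h : (Real.cos a - Real.cos b) * (Real.cos a - Real.cos b)
      + (Real.sin a - Real.sin b) * (Real.sin a - Real.sin b)
      = 4 * ((1 - Real.cos (a - b)) / 2) := by
    rw [Real.cos_sub]
    have ha := Real.sin_sq_add_cos_sq a
    have hb := Real.sin_sq_add_cos_sq b
    nlinarith
  rw [h, show (4 : ℝ) = 2 ^ 2 by norm_num, Real.sqrt_mul (by positivity),
    Real.sqrt_sq (by norm_num)]

lemma sin_ge_edge {y x : ℝ} (hy : 0 ≤ y) (h1 : y ≤ x) (h2 : x ≤ π - y) :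
    Real.sin y ≤ Real.sin x := by
  rcases le_total x (π / 2) with h | h
  · exact Real.sin_le_sin_of_le_of_le_pi_div_two (by linarith) h h1
  · rw [← Real.sin_pi_sub x]
    have hpi := Real.pi_pos
    exact Real.sin_le_sin_of_le_of_le_pi_div_two (by linarith) (by linarith) (by linarith)

lemma key_sin (N : ℕ) (hN : 1 ≤ N) (m : ℤ) (hm : ¬ (N : ℤ) ∣ m) :
    Real.sin (π / N) ≤ |Real.sin (π * m / N)| := by
  have hN0 : (0 : ℝ) < N := by exact_mod_cast hN
  set r : ℤ := m % N with hr
  set q : ℤ := m / N with hq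
  have hmr : m = N * q + r := (Int.mul_ediv_add_emod m N).symm
  have hNz : (N : ℤ) ≠ 0 := by positivity
  have hr0 : 0 < r := by
    rcases (Int.emod_nonneg m hNz).lt_or_eq with h | h
    · exact h
    · exact absurd (Int.dvd_of_emod_eq_zero h.symm) hm
  have hrN : r ≤ (N : ℤ) - 1 := by
    have := Int.emod_lt_of_pos m (show (0:ℤ) < N by exact_mod_cast hN); omega
  have heq : π * m / N = π * r / N + q * π := by
    have : (m : ℝ) = N * q + r := by exact_mod_cast hmr
    field_simp [this]; linarith
  rw [heq, Real.sin_add_int_mul_pi, abs_mul]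
  have h1 : |((-1 : ℝ)) ^ q| = 1 := by
    rcases Int.even_or_odd q with h | h
    · rw [h.neg_one_zpow]; simp
    · rw [Odd.neg_one_zpow h]; simp
  rw [h1, one_mul]
  have hx1 : π / N ≤ π * r / N := by
    apply div_le_div_of_nonneg_right ?_ hN0.le
    nlinarith [Real.pi_pos, (show (1:ℝ) ≤ r by exact_mod_cast hr0)]
  have hx2 : π * r / N ≤ π - π / N := by
    have hrr : (r : ℝ) ≤ (N : ℝ) - 1 := by exact_mod_cast hrN
    rw [div_le_iff₀ hN0]
    have hc : π / N * N = π := div_mul_cancel₀ π hN0.ne'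
    nlinarith [Real.pi_pos]
  have hy : 0 ≤ π / N := by positivity
  calc Real.sin (π / N) ≤ Real.sin (π * r / N) := sin_ge_edge hy hx1 hx2
    _ ≤ |Real.sin (π * r / N)| := le_abs_self _

/-- With `ξ_h = exp(2π(h-1)i/k)` and `η_{iℓ} = exp((2π(ℓ-1)/k - 2π(i-1)/(dk))i)`,
the minimum of `|ξ_h - η_{iℓ}|` over `i ∈ {2,…,d}`, `h, ℓ ∈ {1,…,k}` is attained
at `(i,h,ℓ) = (2,1,1)` and equals `2 sin(π/(dk))`. -/
theorem stmt5 (d k : ℕ) (hd : 2 ≤ d) (hk : 2 ≤ k) :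
    (∀ i ∈ Finset.Icc 2 d, ∀ h ∈ Finset.Icc 1 k, ∀ ℓ ∈ Finset.Icc 1 k,
      dist (Complex.exp (((2 * π * ((1:ℝ) - 1) / k : ℝ) : ℂ) * Complex.I))
          (Complex.exp (((2 * π * ((1:ℝ) - 1) / k - 2 * π * ((2:ℝ) - 1) / (d * k) : ℝ) : ℂ)
            * Complex.I)) ≤
      dist (Complex.exp (((2 * π * ((h:ℝ) - 1) / k : ℝ) : ℂ) * Complex.I))
          (Complex.exp (((2 * π * ((ℓ:ℝ) - 1) / k - 2 * π * ((i:ℝ) - 1) / (d * k) : ℝ) : ℂ)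
            * Complex.I))) ∧
    dist (Complex.exp (((2 * π * ((1:ℝ) - 1) / k : ℝ) : ℂ) * Complex.I))
        (Complex.exp (((2 * π * ((1:ℝ) - 1) / k - 2 * π * ((2:ℝ) - 1) / (d * k) : ℝ) : ℂ)
          * Complex.I)) = 2 * Real.sin (π / (d * k)) := by
  have hd2 : (2 : ℝ) ≤ d := by exact_mod_cast hd
  have hk2 : (2 : ℝ) ≤ k := by exact_mod_cast hk
  have hd0 : (0 : ℝ) < d := by linarith
  have hk0 : (0 : ℝ) < k := by linarith
  have hdk0 : (0 : ℝ) < (d : ℝ) * k := by positivity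
  have hL : dist (Complex.exp (((2 * π * ((1:ℝ) - 1) / k : ℝ) : ℂ) * Complex.I))
      (Complex.exp (((2 * π * ((1:ℝ) - 1) / k - 2 * π * ((2:ℝ) - 1) / (d * k) : ℝ) : ℂ)
        * Complex.I)) = 2 * Real.sin (π / (d * k)) := by
    rw [dist_exp_mul_I]
    have harg : (2 * π * ((1:ℝ) - 1) / k
        - (2 * π * ((1:ℝ) - 1) / k - 2 * π * ((2:ℝ) - 1) / (d * k))) / 2
        = π / ((d : ℝ) * k) := by
      field_simp; ring
    rw [harg, abs_of_nonneg]
    apply Real.sin_nonneg_of_nonneg_of_le_pi (by positivity)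
    have hdk1 : (1 : ℝ) ≤ (d : ℝ) * k := by nlinarith
    rw [div_le_iff₀ hdk0]
    nlinarith [Real.pi_pos]
  refine ⟨?_, hL⟩
  intro i hi h hh ℓ hℓ
  rw [hL, dist_exp_mul_I]
  simp only [Finset.mem_Icc] at hi hh hℓ
  set m : ℤ := d * ((h : ℤ) - ℓ) + ((i : ℤ) - 1) with hm
  have harg : (2 * π * ((h:ℝ) - 1) / k
      - (2 * π * ((ℓ:ℝ) - 1) / k - 2 * π * ((i:ℝ) - 1) / (d * k))) / 2
      = π * (m : ℝ) / ((d : ℝ) * k) := by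
    rw [hm]; push_cast
    field_simp; ring
  rw [harg]
  have hdvd : ¬ ((d * k : ℕ) : ℤ) ∣ m := by
    intro hdvd
    have hdm : (d : ℤ) ∣ m := dvd_trans ⟨(k : ℤ), by push_cast; ring⟩ hdvd
    have hdi : (d : ℤ) ∣ ((i : ℤ) - 1) := by
      have : (i : ℤ) - 1 = m - d * ((h : ℤ) - ℓ) := by rw [hm]; ring
      rw [this]
      exact dvd_sub hdm ⟨(h : ℤ) - ℓ, rfl⟩
    have h1 : (0 : ℤ) < (i : ℤ) - 1 := by
      have : 2 ≤ i := hi.1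
      omega
    have h2 := Int.le_of_dvd h1 hdi
    have : i ≤ d := hi.2
    omega
  have hkey := key_sin (d * k) (by nlinarith) m hdvd
  have hcast : ((d * k : ℕ) : ℝ) = (d : ℝ) * k := by push_cast; ring
  rw [hcast] at hkey
  linarith
end

section
/- Let U : [0,∞) → (0,∞) be continuous with r^{(n-1)/2} e^r U(r) → 𝔲 > 0 as r → ∞. Then for every σ ∈ (0,1) there is a constant C > 0 such that for all x, y, z ∈ ℝⁿ, U(|x - y|) ≤ C e^{-σ|y - z|/2} e^{-(1-σ)|x - z|} whenever |x - z| ≤ |x - y| and |x-y| ≥ |y-z|/2. -/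
open Filter

/-- Key comparison lemma: if `U(r) ~ 𝔲 r^{-(n-1)/2} e^{-r}` at infinity, then for
every `σ ∈ (0,1)` there is `C > 0` with
`U(|x-y|) ≤ C e^{-σ|y-z|/2} e^{-(1-σ)|x-z|}` whenever `|x-z| ≤ |x-y|` and
`|x-y| ≥ |y-z|/2`. -/
theorem stmt10 (n : ℕ) (hn : 1 ≤ n) (U : ℝ → ℝ) (𝔲 : ℝ) (h𝔲 : 0 < 𝔲)
    (hUcont : Continuous U) (hUpos : ∀ r : ℝ, 0 ≤ r → 0 < U r)
    (hdecay : Tendsto (fun r : ℝ => r ^ (((n : ℝ) - 1) / 2) * Real.exp r * U r)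
      atTop (nhds 𝔲)) :
    ∀ σ : ℝ, σ ∈ Set.Ioo (0:ℝ) 1 → ∃ C > 0,
      ∀ x y z : EuclideanSpace ℝ (Fin n),
        ‖x - z‖ ≤ ‖x - y‖ → ‖y - z‖ / 2 ≤ ‖x - y‖ →
        U ‖x - y‖ ≤ C * Real.exp (-(σ * ‖y - z‖ / 2)) * Real.exp (-((1 - σ) * ‖x - z‖)) := by
  intro σ hσ
  have hp : 0 ≤ ((n : ℝ) - 1) / 2 := by
    have : (1 : ℝ) ≤ (n : ℝ) := by exact_mod_cast hn
    linarith
  have h1 : ∀ᶠ r in atTop, r ^ (((n : ℝ) - 1) / 2) * Real.exp r * U r ≤ 𝔲 + 1 :=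
    hdecay.eventually (eventually_le_nhds (lt_add_one 𝔲))
  have h2 : ∀ᶠ r in atTop, Real.exp r * U r ≤ 𝔲 + 1 := by
    filter_upwards [h1, eventually_ge_atTop (1 : ℝ)] with r h hr
    have hrp : 1 ≤ r ^ (((n : ℝ) - 1) / 2) := Real.one_le_rpow hr hp
    have hU : 0 < U r := hUpos r (by linarith)
    nlinarith [Real.exp_pos r]
  obtain ⟨R, hR⟩ := eventually_atTop.mp h2
  set R' := max R 0 with hR'
  have hcont : ContinuousOn (fun r => Real.exp r * U r) (Set.Icc 0 R') :=
    (Real.continuous_exp.mul hUcont).continuousOn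
  obtain ⟨rm, hrm, hmax⟩ := (isCompact_Icc).exists_isMaxOn
    ⟨0, by simp [hR', le_max_right]⟩ hcont
  set C := max (𝔲 + 1) (Real.exp rm * U rm) with hC
  have hCpos : 0 < C := lt_of_lt_of_le (by linarith) (le_max_left _ _)
  have key : ∀ r : ℝ, 0 ≤ r → U r ≤ C * Real.exp (-r) := by
    intro r hr
    have hle : Real.exp r * U r ≤ C := by
      rcases le_total r R' with h | h
      · exact (hmax ⟨hr, h⟩).trans (le_max_right _ _)
      · exact (hR r ((le_max_left R 0).trans h)).trans (le_max_left _ _)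
    rw [Real.exp_neg, ← div_eq_mul_inv, le_div_iff₀ (Real.exp_pos r), mul_comm]
    exact hle
  refine ⟨C, hCpos, ?_⟩
  intro x y z hxz hyz
  have ha : 0 ≤ ‖y - z‖ := norm_nonneg _
  have hb : 0 ≤ ‖x - z‖ := norm_nonneg _
  have hr : 0 ≤ ‖x - y‖ := norm_nonneg _
  have hsum : σ * ‖y - z‖ / 2 + (1 - σ) * ‖x - z‖ ≤ ‖x - y‖ := by
    obtain ⟨hσ0, hσ1⟩ := hσ
    nlinarith
  calc U ‖x - y‖ ≤ C * Real.exp (-‖x - y‖) := key _ hr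
    _ ≤ C * Real.exp (-(σ * ‖y - z‖ / 2 + (1 - σ) * ‖x - z‖)) := by
        apply mul_le_mul_of_nonneg_left (Real.exp_le_exp.2 (by linarith)) hCpos.le
    _ = C * Real.exp (-(σ * ‖y - z‖ / 2)) * Real.exp (-((1 - σ) * ‖x - z‖)) := by
        rw [mul_assoc, ← Real.exp_add]; ring_nf
end

section
/- Let b₁ < b₂ be positive reals, a₁, a₂ ∈ ℝ, and let W₁, W₂ : ℝⁿ → ℝ be positive continuous radial functions with W_i(x) ~ |x|^{-a_i} e^{-b_i|x|} as |x| → ∞. Then there exists a constant c > 0 such that ∫_{ℝⁿ} W₁(x + ζ) W₂(x) dx ~ c e^{-b₁|ζ|} |ζ|^{-a₁} as |ζ| → ∞. -/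
open Filter MeasureTheory

set_option maxHeartbeats 2000000

private lemma aux_of_cocompact {n : ℕ} {P : EuclideanSpace ℝ (Fin n) → Prop}
    (h : ∀ᶠ y in cocompact (EuclideanSpace ℝ (Fin n)), P y) :
    ∃ R : ℝ, ∀ y, R ≤ ‖y‖ → P y := by
  rw [← Metric.cobounded_eq_cocompact] at h
  obtain ⟨R, -, hR⟩ :=
    (Filter.hasBasis_cobounded_norm (E := EuclideanSpace ℝ (Fin n))).eventually_iff.mp h
  exact ⟨R, fun y hy => hR hy⟩

private lemma aux_bdd {n : ℕ} {g : EuclideanSpace ℝ (Fin n) → ℝ}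
    (hg : Continuous g) (h : Tendsto g (cocompact (EuclideanSpace ℝ (Fin n))) (nhds 0)) :
    ∃ C, ∀ y, g y ≤ C := by
  obtain ⟨R, hR⟩ := aux_of_cocompact (h.eventually_lt_const one_pos)
  obtain ⟨C₀, hC₀⟩ := (isCompact_closedBall (0 : EuclideanSpace ℝ (Fin n))
    R).exists_bound_of_continuousOn hg.continuousOn
  refine ⟨max C₀ 1, fun y => ?_⟩
  rcases le_or_gt R ‖y‖ with hy | hy
  · exact (hR y hy).le.trans (le_max_right _ _)
  · refine le_trans ?_ (le_max_left _ _)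
    have := hC₀ y (by simpa [Metric.mem_closedBall, dist_zero_right] using hy.le)
    exact (le_abs_self _).trans (by simpa [Real.norm_eq_abs] using this)

private lemma aux_exp_bound {n : ℕ} {W : EuclideanSpace ℝ (Fin n) → ℝ} {a b b' : ℝ}
    (hW : Continuous W) (hb' : 0 < b') (hbb : b' < b)
    (h : Tendsto (fun x => W x / (‖x‖ ^ (-a) * Real.exp (-(b * ‖x‖))))
      (cocompact (EuclideanSpace ℝ (Fin n))) (nhds 1)) :
    ∃ C, 0 < C ∧ ∀ y, W y ≤ C * Real.exp (-(b' * ‖y‖)) := by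
  have hk : Tendsto (fun y : EuclideanSpace ℝ (Fin n) =>
      ‖y‖ ^ (-a) * Real.exp (-(b - b') * ‖y‖))
      (cocompact (EuclideanSpace ℝ (Fin n))) (nhds 0) :=
    (tendsto_rpow_mul_exp_neg_mul_atTop_nhds_zero (-a) (b - b')
      (by linarith)).comp tendsto_norm_cocompact_atTop
  have hg0 : Tendsto (fun y => W y * Real.exp (b' * ‖y‖))
      (cocompact (EuclideanSpace ℝ (Fin n))) (nhds 0) := by
    have hmul := h.mul hk
    rw [one_mul] at hmul
    refine Tendsto.congr' ?_ hmul
    have h1 : ∀ᶠ y in cocompact (EuclideanSpace ℝ (Fin n)), (1:ℝ) ≤ ‖y‖ := by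
      rw [← Metric.cobounded_eq_cocompact]; exact eventually_cobounded_le_norm 1
    filter_upwards [h1] with y hy
    have hy0 : (0:ℝ) < ‖y‖ := lt_of_lt_of_le one_pos hy
    have he : Real.exp (-(b - b') * ‖y‖)
        = Real.exp (-(b * ‖y‖)) * Real.exp (b' * ‖y‖) := by
      rw [← Real.exp_add]; ring_nf
    have hp : (0:ℝ) < ‖y‖ ^ (-a) := Real.rpow_pos_of_pos hy0 _
    have hq : (0:ℝ) < Real.exp (-(b * ‖y‖)) := Real.exp_pos _
    rw [he]
    field_simp
  obtain ⟨C, hC⟩ := aux_bdd (hW.mul (Real.continuous_exp.comp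
    (continuous_const.mul continuous_norm))) hg0
  refine ⟨max C 1, lt_of_lt_of_le one_pos (le_max_right _ _), fun y => ?_⟩
  have h1 : W y * Real.exp (b' * ‖y‖) ≤ max C 1 := (hC y).trans (le_max_left _ _)
  calc W y = W y * Real.exp (b' * ‖y‖) * Real.exp (-(b' * ‖y‖)) := by
        rw [mul_assoc, ← Real.exp_add]; simp
    _ ≤ max C 1 * Real.exp (-(b' * ‖y‖)) :=
        mul_le_mul_of_nonneg_right h1 (Real.exp_nonneg _)

private lemma aux_integrable_exp {n : ℕ} {δ : ℝ} (hδ : 0 < δ) :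
    Integrable (fun x : EuclideanSpace ℝ (Fin n) => Real.exp (-(δ * ‖x‖))) := by
  have hr : (Module.finrank ℝ (EuclideanSpace ℝ (Fin n)) : ℝ) < ((n : ℝ) + 1) := by
    simp [finrank_euclideanSpace]
  set r : ℝ := (n : ℝ) + 1 with hrdef
  have hgc : Continuous (fun x : EuclideanSpace ℝ (Fin n) =>
      Real.exp (-(δ * ‖x‖)) * (1 + ‖x‖) ^ r) := by
    refine (Real.continuous_exp.comp (continuous_const.mul continuous_norm).neg).mul ?_
    exact (continuous_const.add continuous_norm).rpow_const (fun x => Or.inl (by positivity) : ∀ x : EuclideanSpace ℝ (Fin n), (1:ℝ) + ‖x‖ ≠ 0 ∨ 0 ≤ r)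
  have hg0 : Tendsto (fun x : EuclideanSpace ℝ (Fin n) =>
      Real.exp (-(δ * ‖x‖)) * (1 + ‖x‖) ^ r)
      (cocompact (EuclideanSpace ℝ (Fin n))) (nhds 0) := by
    have h1 : Tendsto (fun t : ℝ => (1 + t) ^ r * Real.exp (-δ * (1 + t)))
        atTop (nhds 0) :=
      (tendsto_rpow_mul_exp_neg_mul_atTop_nhds_zero r δ hδ).comp
        (tendsto_atTop_add_const_left _ 1 tendsto_id)
    have h2 : Tendsto (fun t : ℝ => (1 + t) ^ r * Real.exp (-δ * (1 + t)) * Real.exp δ)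
        atTop (nhds 0) := by simpa using h1.mul_const (Real.exp δ)
    have h3 := h2.comp (tendsto_norm_cocompact_atTop (E := EuclideanSpace ℝ (Fin n)))
    refine h3.congr fun x => ?_
    simp only [Function.comp]
    rw [mul_assoc, ← Real.exp_add, mul_comm]
    congr 1
    ring
  obtain ⟨C, hC⟩ := aux_bdd hgc hg0
  refine ((integrable_one_add_norm (E := EuclideanSpace ℝ (Fin n)) (μ := volume)
    hr).const_mul C).mono' ?_ (ae_of_all _ fun x => ?_)
  · exact (Real.continuous_exp.comp (continuous_const.mul continuous_norm).neg).aestronglyMeasurable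
  · have h1 : (0:ℝ) < 1 + ‖x‖ := by positivity
    rw [Real.norm_eq_abs, abs_of_pos (Real.exp_pos _)]
    calc Real.exp (-(δ * ‖x‖))
        = Real.exp (-(δ * ‖x‖)) * (1 + ‖x‖) ^ r * (1 + ‖x‖) ^ (-r) := by
          rw [mul_assoc, ← Real.rpow_add h1]; simp
      _ ≤ C * (1 + ‖x‖) ^ (-r) :=
          mul_le_mul_of_nonneg_right (hC x) (Real.rpow_nonneg h1.le _)

private lemma aux_s_div {n : ℕ} (x e₀ : EuclideanSpace ℝ (Fin n)) (he : ‖e₀‖ = 1) :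
    Tendsto (fun R : ℝ => ‖x + R • e₀‖ / R) atTop (nhds 1) := by
  have hbnd : ∀ R : ℝ, 0 ≤ R → |‖x + R • e₀‖ - R| ≤ ‖x‖ := by
    intro R hR
    have h1 : |‖x + R • e₀‖ - ‖R • e₀‖| ≤ ‖(x + R • e₀) - R • e₀‖ :=
      abs_norm_sub_norm_le _ _
    simpa [norm_smul, he, abs_of_nonneg hR] using h1
  have h0 : Tendsto (fun R : ℝ => (‖x + R • e₀‖ - R) / R) atTop (nhds 0) := by
    refine squeeze_zero_norm' ?_ ((tendsto_const_nhds (x := ‖x‖) (f := atTop)).div_atTop tendsto_id)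
    filter_upwards [eventually_ge_atTop (1:ℝ)] with R hR
    have hR0 : (0:ℝ) < R := lt_of_lt_of_le one_pos hR
    rw [Real.norm_eq_abs, abs_div, abs_of_pos hR0]
    simp only [id_eq]
    gcongr
    exact hbnd R hR0.le
  have h1 := h0.add_const 1
  rw [zero_add] at h1
  refine h1.congr' ?_
  filter_upwards [eventually_ge_atTop (1:ℝ)] with R hR
  have hR0 : (0:ℝ) < R := lt_of_lt_of_le one_pos hR
  field_simp
  ring

private lemma aux_d_tendsto {n : ℕ} (x e₀ : EuclideanSpace ℝ (Fin n)) (he : ‖e₀‖ = 1) :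
    Tendsto (fun R : ℝ => ‖x + R • e₀‖ - R) atTop
      (nhds (inner ℝ x e₀ : ℝ)) := by
  set u : ℝ := (inner ℝ x e₀ : ℝ) with hu
  have hnorm : ∀ R : ℝ, 0 ≤ R → ‖x + R • e₀‖ ^ 2 = ‖x‖ ^ 2 + 2 * R * u + R ^ 2 := by
    intro R hR
    rw [norm_add_sq_real, real_inner_smul_right, norm_smul, he, mul_one,
      Real.norm_eq_abs, abs_of_nonneg hR]
    ring
  have hsdiv := aux_s_div x e₀ he
  have hnum : Tendsto (fun R : ℝ => ‖x‖ ^ 2 * R⁻¹ + 2 * u) atTop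
      (nhds (‖x‖ ^ 2 * 0 + 2 * u)) :=
    ((tendsto_inv_atTop_zero).const_mul (‖x‖ ^ 2)).add tendsto_const_nhds
  have hden : Tendsto (fun R : ℝ => ‖x + R • e₀‖ / R + 1) atTop (nhds (1 + 1)) :=
    hsdiv.add tendsto_const_nhds
  have hq : Tendsto (fun R : ℝ => (‖x‖ ^ 2 * R⁻¹ + 2 * u) / (‖x + R • e₀‖ / R + 1))
      atTop (nhds u) := by
    have h := hnum.div hden (by norm_num)
    rw [show (‖x‖ ^ 2 * 0 + 2 * u) / (1 + 1) = u by ring] at h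
    exact h
  refine hq.congr' ?_
  filter_upwards [eventually_ge_atTop (max ‖x‖ 0 + 1)] with R hR
  have hR0 : (0:ℝ) < R := lt_of_lt_of_le (by positivity) hR
  have hs0 : (0:ℝ) ≤ ‖x + R • e₀‖ := norm_nonneg _
  have hden0 : (0:ℝ) < ‖x + R • e₀‖ / R + 1 := by positivity
  rw [div_eq_iff hden0.ne']
  have hkey := hnorm R hR0.le
  field_simp
  nlinarith [hkey]

private lemma aux_map_cocompact {n : ℕ} (x e₀ : EuclideanSpace ℝ (Fin n)) (he : ‖e₀‖ = 1) :
    Tendsto (fun R : ℝ => x + R • e₀) atTop (cocompact (EuclideanSpace ℝ (Fin n))) := by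
  rw [← Metric.cobounded_eq_cocompact]
  apply tendsto_norm_atTop_iff_cobounded.mp
  apply tendsto_atTop_mono (fun R => ?_) (tendsto_atTop_add_const_right atTop (-‖x‖) tendsto_id)
  have h1 : ‖R • e₀‖ ≤ ‖x + R • e₀‖ + ‖x‖ := by
    calc ‖R • e₀‖ = ‖(x + R • e₀) - x‖ := by congr 1; abel
      _ ≤ ‖x + R • e₀‖ + ‖x‖ := norm_sub_le _ _
  have h2 : R ≤ ‖R • e₀‖ := by rw [norm_smul, he, mul_one]; exact le_abs_self R
  simp only [id_eq]
  linarith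

private lemma aux_pointwise {n : ℕ} {a₁ b₁ : ℝ}
    {W₁ : EuclideanSpace ℝ (Fin n) → ℝ}
    (hasymp₁ : Tendsto (fun x => W₁ x / (‖x‖ ^ (-a₁) * Real.exp (-(b₁ * ‖x‖))))
      (cocompact (EuclideanSpace ℝ (Fin n))) (nhds 1))
    (e₀ : EuclideanSpace ℝ (Fin n)) (he : ‖e₀‖ = 1) (x : EuclideanSpace ℝ (Fin n)) :
    Tendsto (fun R : ℝ => W₁ (x + R • e₀) / (Real.exp (-(b₁ * R)) * R ^ (-a₁)))
      atTop (nhds (Real.exp (-(b₁ * (inner ℝ x e₀ : ℝ))))) := by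
  set u : ℝ := (inner ℝ x e₀ : ℝ) with hu
  have hd := aux_d_tendsto x e₀ he
  have hmap := aux_map_cocompact x e₀ he
  have hQ : Tendsto (fun R : ℝ => W₁ (x + R • e₀) /
      (‖x + R • e₀‖ ^ (-a₁) * Real.exp (-(b₁ * ‖x + R • e₀‖)))) atTop (nhds 1) :=
    hasymp₁.comp hmap
  have hratio : Tendsto (fun R : ℝ => R / ‖x + R • e₀‖) atTop (nhds 1) := by
    have h := (aux_s_div x e₀ he).inv₀ one_ne_zero
    rw [inv_one] at h
    refine h.congr fun R => ?_
    rw [inv_div]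
  have hP : Tendsto (fun R : ℝ => (R / ‖x + R • e₀‖) ^ a₁) atTop (nhds 1) := by
    have hcont : ContinuousAt (fun t : ℝ => t ^ a₁) 1 :=
      Real.continuousAt_rpow_const 1 a₁ (Or.inl one_ne_zero)
    have := hcont.tendsto.comp hratio
    rwa [Real.one_rpow] at this
  have hEx : Tendsto (fun R : ℝ => Real.exp (-(b₁ * (‖x + R • e₀‖ - R)))) atTop
      (nhds (Real.exp (-(b₁ * u)))) := by
    have h1 : Tendsto (fun R : ℝ => -(b₁ * (‖x + R • e₀‖ - R))) atTop (nhds (-(b₁ * u))) :=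
      (hd.const_mul b₁).neg
    exact (Real.continuous_exp.continuousAt.tendsto).comp h1
  have H : Tendsto (fun R : ℝ => (W₁ (x + R • e₀) /
      (‖x + R • e₀‖ ^ (-a₁) * Real.exp (-(b₁ * ‖x + R • e₀‖)))) *
      ((R / ‖x + R • e₀‖) ^ a₁) * Real.exp (-(b₁ * (‖x + R • e₀‖ - R)))) atTop
      (nhds (Real.exp (-(b₁ * u)))) := by
    have := (hQ.mul hP).mul hEx
    simpa using this
  refine H.congr' ?_
  filter_upwards [eventually_ge_atTop (‖x‖ + 1)] with R hR
  have hR0 : (0:ℝ) < R := lt_of_lt_of_le (by positivity) hR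
  have hs0 : (0:ℝ) < ‖x + R • e₀‖ := by
    have h1 : ‖R • e₀‖ ≤ ‖x + R • e₀‖ + ‖x‖ := by
      calc ‖R • e₀‖ = ‖(x + R • e₀) - x‖ := by congr 1; abel
        _ ≤ ‖x + R • e₀‖ + ‖x‖ := norm_sub_le _ _
    have h2 : R ≤ ‖R • e₀‖ := by rw [norm_smul, he, mul_one]; exact le_abs_self R
    linarith
  set s : ℝ := ‖x + R • e₀‖ with hs
  have e3 : Real.exp (-(b₁ * (s - R))) = Real.exp (b₁ * R) / Real.exp (b₁ * s) := by
    rw [← Real.exp_sub]; ring_nf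
  have e4 : Real.exp (-(b₁ * R)) = (Real.exp (b₁ * R))⁻¹ := by
    rw [← Real.exp_neg]
  have e5 : Real.exp (-(b₁ * s)) = (Real.exp (b₁ * s))⁻¹ := by
    rw [← Real.exp_neg]
  rw [e3, e4, e5, Real.rpow_neg hR0.le, Real.rpow_neg hs0.le, Real.div_rpow hR0.le hs0.le]
  have n1 : Real.exp (b₁ * R) ≠ 0 := (Real.exp_pos _).ne'
  have n2 : Real.exp (b₁ * s) ≠ 0 := (Real.exp_pos _).ne'
  have n3 : R ^ a₁ ≠ 0 := (Real.rpow_pos_of_pos hR0 _).ne'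
  have n4 : s ^ a₁ ≠ 0 := (Real.rpow_pos_of_pos hs0 _).ne'
  field_simp

private lemma aux_rotate {n : ℕ} {W₁ W₂ : EuclideanSpace ℝ (Fin n) → ℝ}
    (hW₁rad : ∀ x y, ‖x‖ = ‖y‖ → W₁ x = W₁ y)
    (hW₂rad : ∀ x y, ‖x‖ = ‖y‖ → W₂ x = W₂ y)
    (e₀ : EuclideanSpace ℝ (Fin n)) (he : ‖e₀‖ = 1) (ζ : EuclideanSpace ℝ (Fin n)) :
    (∫ x, W₁ (x + ζ) * W₂ x) = ∫ x, W₁ (x + ‖ζ‖ • e₀) * W₂ x := by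
  set w : EuclideanSpace ℝ (Fin n) := ‖ζ‖ • e₀ with hw
  have hwn : ‖w‖ = ‖ζ‖ := by
    rw [hw, norm_smul, he, mul_one, norm_norm]
  set T := Submodule.reflection (ℝ ∙ (w - ζ))ᗮ with hT
  have hTw : T w = ζ := Submodule.reflection_sub hwn
  have hmp : MeasurePreserving T volume volume :=
    LinearIsometryEquiv.measurePreserving T
  have hemb : MeasurableEmbedding T := T.toHomeomorph.measurableEmbedding
  calc (∫ x, W₁ (x + ζ) * W₂ x) = ∫ x, W₁ (T x + ζ) * W₂ (T x) :=
        (hmp.integral_comp hemb _).symm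
    _ = ∫ x, W₁ (x + w) * W₂ x := by
        congr 1
        funext y
        have h2 : W₂ (T y) = W₂ y := hW₂rad _ _ (T.norm_map y)
        have h1 : W₁ (T y + ζ) = W₁ (y + w) := by
          rw [← hTw, ← T.map_add]
          exact hW₁rad _ _ (T.norm_map _)
        rw [h1, h2]


/-- Interaction asymptotics (Lemma A.1(i)): if `W_i(x) ~ |x|^{-a_i} e^{-b_i|x|}`
with `0 < b₁ < b₂`, then there is `c > 0` with
`∫ W₁(x+ζ)W₂(x) dx ~ c e^{-b₁|ζ|}|ζ|^{-a₁}` as `|ζ| → ∞`. -/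
theorem stmt12 (n : ℕ) (hn : 1 ≤ n) (a₁ a₂ b₁ b₂ : ℝ)
    (hb₁ : 0 < b₁) (hb : b₁ < b₂)
    (W₁ W₂ : EuclideanSpace ℝ (Fin n) → ℝ)
    (hW₁cont : Continuous W₁) (hW₂cont : Continuous W₂)
    (hW₁pos : ∀ x, 0 < W₁ x) (hW₂pos : ∀ x, 0 < W₂ x)
    (hW₁rad : ∀ x y, ‖x‖ = ‖y‖ → W₁ x = W₁ y)
    (hW₂rad : ∀ x y, ‖x‖ = ‖y‖ → W₂ x = W₂ y)
    (hasymp₁ : Tendsto (fun x => W₁ x / (‖x‖ ^ (-a₁) * Real.exp (-(b₁ * ‖x‖))))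
      (cocompact (EuclideanSpace ℝ (Fin n))) (nhds 1))
    (hasymp₂ : Tendsto (fun x => W₂ x / (‖x‖ ^ (-a₂) * Real.exp (-(b₂ * ‖x‖))))
      (cocompact (EuclideanSpace ℝ (Fin n))) (nhds 1)) :
    ∃ c > 0, Tendsto
      (fun ζ : EuclideanSpace ℝ (Fin n) =>
        (∫ x, W₁ (x + ζ) * W₂ x) / (Real.exp (-(b₁ * ‖ζ‖)) * ‖ζ‖ ^ (-a₁)))
      (cocompact (EuclideanSpace ℝ (Fin n))) (nhds c) := by
  classical
  -- unit vector
  set e₀ : EuclideanSpace ℝ (Fin n) := EuclideanSpace.single ⟨0, hn⟩ (1:ℝ) with he₀def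
  have he₀ : ‖e₀‖ = 1 := by simp [he₀def, EuclideanSpace.norm_single]
  -- constants
  obtain ⟨ε, hε, hεb₁, hεb₂⟩ : ∃ ε : ℝ, 0 < ε ∧ ε ≤ b₁ ∧ ε ≤ (b₂ - b₁) / 2 :=
    ⟨min b₁ ((b₂ - b₁) / 2), lt_min hb₁ (by linarith), min_le_left _ _, min_le_right _ _⟩
  obtain ⟨b', hb'def⟩ : ∃ t : ℝ, t = b₁ + ε := ⟨_, rfl⟩
  obtain ⟨b'', hb''def⟩ : ∃ t : ℝ, t = b₁ - ε / 4 := ⟨_, rfl⟩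
  obtain ⟨δ, hδdef⟩ : ∃ t : ℝ, t = ε / 2 := ⟨_, rfl⟩
  have hδ : 0 < δ := by rw [hδdef]; linarith
  have hb'1 : 0 < b' := by rw [hb'def]; linarith
  have hb'2 : b' < b₂ := by rw [hb'def]; linarith
  have hb''1 : 0 < b'' := by rw [hb''def]; linarith
  have hb''2 : b'' < b₁ := by rw [hb''def]; linarith
  obtain ⟨C₂, hC₂pos, hC₂⟩ := aux_exp_bound hW₂cont hb'1 hb'2 hasymp₂
  obtain ⟨C₁, hC₁pos, hC₁⟩ := aux_exp_bound hW₁cont hb''1 hb''2 hasymp₁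
  -- sharp upper bound for W₁
  obtain ⟨R₀, hR₀⟩ : ∃ R₀ : ℝ, ∀ y : EuclideanSpace ℝ (Fin n), R₀ ≤ ‖y‖ →
      W₁ y ≤ 2 * (‖y‖ ^ (-a₁) * Real.exp (-(b₁ * ‖y‖))) := by
    have h1 : ∀ᶠ y in cocompact (EuclideanSpace ℝ (Fin n)),
        W₁ y / (‖y‖ ^ (-a₁) * Real.exp (-(b₁ * ‖y‖))) < 2 :=
      hasymp₁.eventually_lt_const one_lt_two
    have h2 : ∀ᶠ y in cocompact (EuclideanSpace ℝ (Fin n)), (1:ℝ) ≤ ‖y‖ := by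
      rw [← Metric.cobounded_eq_cocompact]; exact eventually_cobounded_le_norm 1
    obtain ⟨R₀, hR₀⟩ := aux_of_cocompact (h1.and h2)
    refine ⟨R₀, fun y hy => ?_⟩
    obtain ⟨hlt, hy1⟩ := hR₀ y hy
    have hy0 : (0:ℝ) < ‖y‖ := lt_of_lt_of_le one_pos hy1
    have hden : 0 < ‖y‖ ^ (-a₁) * Real.exp (-(b₁ * ‖y‖)) := by positivity
    calc W₁ y = W₁ y / (‖y‖ ^ (-a₁) * Real.exp (-(b₁ * ‖y‖)))
          * (‖y‖ ^ (-a₁) * Real.exp (-(b₁ * ‖y‖))) := (div_mul_cancel₀ _ hden.ne').symm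
      _ ≤ 2 * (‖y‖ ^ (-a₁) * Real.exp (-(b₁ * ‖y‖))) :=
          mul_le_mul_of_nonneg_right hlt.le hden.le
  set R₁ : ℝ := max R₀ 1 with hR₁def
  -- threshold for the polynomial factor
  obtain ⟨T₁, hT₁⟩ : ∃ T₁ : ℝ, ∀ t : ℝ, T₁ ≤ t → t ^ a₁ * Real.exp (-(ε/8) * t) ≤ 1 := by
    have h := (tendsto_rpow_mul_exp_neg_mul_atTop_nhds_zero a₁ (ε/8)
      (by linarith)).eventually_lt_const one_pos
    obtain ⟨T₁, hT₁⟩ := eventually_atTop.mp h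
    exact ⟨T₁, fun t ht => (hT₁ t ht).le⟩
  set T₀ : ℝ := max (max (2 * R₁) 1) T₁ with hT₀def
  -- limit function
  set f : EuclideanSpace ℝ (Fin n) → ℝ :=
    fun x => Real.exp (-(b₁ * (inner ℝ x e₀ : ℝ))) * W₂ x with hfdef
  have hfpos : ∀ x, 0 < f x := fun x => mul_pos (Real.exp_pos _) (hW₂pos x)
  have hfcont : Continuous f :=
    (Real.continuous_exp.comp ((continuous_const.mul
      ((continuous_id.inner continuous_const))).neg)).mul hW₂cont
  have hfle : ∀ x, f x ≤ C₂ * Real.exp (-(δ * ‖x‖)) := by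
    intro x
    have hinner : |(inner ℝ x e₀ : ℝ)| ≤ ‖x‖ := by
      have := abs_real_inner_le_norm x e₀
      rwa [he₀, mul_one] at this
    have h1 : Real.exp (-(b₁ * (inner ℝ x e₀ : ℝ))) ≤ Real.exp (b₁ * ‖x‖) := by
      apply Real.exp_le_exp.mpr
      have := neg_abs_le (inner ℝ x e₀ : ℝ)
      nlinarith [abs_nonneg (inner ℝ x e₀ : ℝ)]
    calc f x ≤ Real.exp (b₁ * ‖x‖) * (C₂ * Real.exp (-(b' * ‖x‖))) :=
          mul_le_mul h1 (hC₂ x) (hW₂pos x).le (Real.exp_nonneg _)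
      _ = C₂ * Real.exp (b₁ * ‖x‖ + -(b' * ‖x‖)) := by rw [Real.exp_add]; ring
      _ ≤ C₂ * Real.exp (-(δ * ‖x‖)) := by
          apply mul_le_mul_of_nonneg_left _ hC₂pos.le
          apply Real.exp_le_exp.mpr
          have hx0 := norm_nonneg x
          rw [hb'def, hδdef]
          nlinarith [hε, hx0, mul_nonneg hε.le hx0]
  have hfint : Integrable f := by
    refine ((aux_integrable_exp (n := n) hδ).const_mul C₂).mono'
      hfcont.aestronglyMeasurable (ae_of_all _ fun x => ?_)
    rw [Real.norm_eq_abs, abs_of_pos (hfpos x)]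
    exact hfle x
  have hc : 0 < ∫ x, f x := by
    rw [integral_pos_iff_support_of_nonneg (fun x => (hfpos x).le) hfint]
    have hsupp : Function.support f = Set.univ :=
      Set.eq_univ_of_forall (fun x => (hfpos x).ne')
    rw [hsupp]
    exact isOpen_univ.measure_pos _ ⟨0, trivial⟩
  refine ⟨∫ x, f x, hc, ?_⟩
  -- main convergence along rays
  have hmain : Tendsto (fun R : ℝ => (∫ x, W₁ (x + R • e₀) * W₂ x) /
      (Real.exp (-(b₁ * R)) * R ^ (-a₁))) atTop (nhds (∫ x, f x)) := by
    have hconv : Tendsto (fun R : ℝ => ∫ x, (W₁ (x + R • e₀) * W₂ x) /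
        (Real.exp (-(b₁ * R)) * R ^ (-a₁))) atTop (nhds (∫ x, f x)) := by
      apply tendsto_integral_filter_of_dominated_convergence
        (bound := fun x => (2 * 2 ^ |a₁| * C₂ + C₁ * C₂) * Real.exp (-(δ * ‖x‖)))
      · filter_upwards with R
        exact (((hW₁cont.comp (continuous_id.add continuous_const)).mul
          hW₂cont).div_const _).aestronglyMeasurable
      · filter_upwards [eventually_ge_atTop T₀] with R hR
        apply ae_of_all
        intro x
        have hR1 : (1:ℝ) ≤ R := le_trans (le_trans (le_max_right (2*R₁) 1) (le_max_left _ T₁)) hR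
        have hR2 : 2 * R₁ ≤ R := le_trans (le_trans (le_max_left (2*R₁) 1) (le_max_left _ T₁)) hR
        have hRT₁ : T₁ ≤ R := le_trans (le_max_right _ _) hR
        have hR0 : (0:ℝ) < R := lt_of_lt_of_le one_pos hR1
        have hexpR : (0:ℝ) < Real.exp (-(b₁ * R)) := Real.exp_pos _
        have hpowR : (0:ℝ) < R ^ (-a₁) := Real.rpow_pos_of_pos hR0 _
        have hFnn : 0 ≤ W₁ (x + R • e₀) * W₂ x / (Real.exp (-(b₁ * R)) * R ^ (-a₁)) :=
          div_nonneg (mul_nonneg (hW₁pos _).le (hW₂pos _).le)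
            (mul_nonneg hexpR.le hpowR.le)
        rw [Real.norm_eq_abs, abs_of_nonneg hFnn]
        have hdeneq : Real.exp (-(b₁ * R)) * R ^ (-a₁) = (Real.exp (b₁ * R) * R ^ a₁)⁻¹ := by
          rw [Real.exp_neg, Real.rpow_neg hR0.le, mul_inv]
        rw [hdeneq, div_inv_eq_mul]
        set s : ℝ := ‖x + R • e₀‖ with hsdef
        have hsl : R - ‖x‖ ≤ s := by
          have h1 : ‖R • e₀‖ ≤ ‖x + R • e₀‖ + ‖x‖ := by
            calc ‖R • e₀‖ = ‖(x + R • e₀) - x‖ := by congr 1; abel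
              _ ≤ ‖x + R • e₀‖ + ‖x‖ := norm_sub_le _ _
          have h2 : R ≤ ‖R • e₀‖ := by rw [norm_smul, he₀, mul_one]; exact le_abs_self R
          rw [hsdef]; linarith
        have hsu : s ≤ ‖x‖ + R := by
          have h1 : ‖x + R • e₀‖ ≤ ‖x‖ + ‖R • e₀‖ := norm_add_le _ _
          have h2 : ‖R • e₀‖ = R := by
            rw [norm_smul, he₀, mul_one, Real.norm_eq_abs, abs_of_pos hR0]
          rw [hsdef]; linarith
        have hpow2 : (0:ℝ) < 2 ^ |a₁| := Real.rpow_pos_of_pos two_pos _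
        rcases le_or_gt ‖x‖ (R/2) with hx | hx
        · -- main region
          have hs2 : R / 2 ≤ s := by linarith
          have hs0 : (0:ℝ) < s := by linarith
          have hsR₀ : R₀ ≤ s := by
            have h3 : R₀ ≤ R₁ := le_max_left _ _
            linarith
          have hW₁b : W₁ (x + R • e₀) ≤ 2 * (s ^ (-a₁) * Real.exp (-(b₁ * s))) := hR₀ _ hsR₀
          have hW₂b := hC₂ x
          have hPoly : s ^ (-a₁) * R ^ a₁ ≤ 2 ^ |a₁| := by
            have hfrac : s ^ (-a₁) * R ^ a₁ = (R / s) ^ a₁ := by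
              rw [Real.div_rpow hR0.le hs0.le, Real.rpow_neg hs0.le]; ring
            rw [hfrac]
            rcases le_or_gt 0 a₁ with ha | ha
            · have h1 : R / s ≤ 2 := by rw [div_le_iff₀ hs0]; linarith
              calc (R/s) ^ a₁ ≤ 2 ^ a₁ := Real.rpow_le_rpow (by positivity) h1 ha
                _ ≤ 2 ^ |a₁| :=
                    Real.rpow_le_rpow_of_exponent_le one_le_two (le_abs_self _)
            · have h1 : (1:ℝ)/2 ≤ R / s := by
                rw [div_le_div_iff₀ two_pos hs0]
                linarith
              calc (R/s) ^ a₁ ≤ ((1:ℝ)/2) ^ a₁ :=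
                    Real.rpow_le_rpow_of_nonpos (by norm_num) h1 ha.le
                _ = 2 ^ (-a₁) := by
                    rw [one_div, Real.inv_rpow (by norm_num : (0:ℝ) ≤ 2),
                      ← Real.rpow_neg (by norm_num : (0:ℝ) ≤ 2)]
                _ = 2 ^ |a₁| := by rw [abs_of_neg ha]
          have hExp : Real.exp (-(b₁ * s)) * Real.exp (b₁ * R) ≤ Real.exp (b₁ * ‖x‖) := by
            rw [← Real.exp_add]
            apply Real.exp_le_exp.mpr
            have h1 : b₁ * (R - ‖x‖) ≤ b₁ * s := mul_le_mul_of_nonneg_left hsl hb₁.le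
            nlinarith [h1]
          calc W₁ (x + R • e₀) * W₂ x * (Real.exp (b₁ * R) * R ^ a₁)
              ≤ (2 * (s ^ (-a₁) * Real.exp (-(b₁ * s)))) *
                  (C₂ * Real.exp (-(b' * ‖x‖))) * (Real.exp (b₁ * R) * R ^ a₁) := by
                apply mul_le_mul_of_nonneg_right _ (by positivity)
                exact mul_le_mul hW₁b hW₂b (hW₂pos x).le (by positivity)
            _ = 2 * C₂ * ((s ^ (-a₁) * R ^ a₁) *
                  ((Real.exp (-(b₁ * s)) * Real.exp (b₁ * R)) * Real.exp (-(b' * ‖x‖)))) := by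
                ring
            _ ≤ 2 * C₂ * ((2 ^ |a₁|) *
                  (Real.exp (b₁ * ‖x‖) * Real.exp (-(b' * ‖x‖)))) := by
                apply mul_le_mul_of_nonneg_left _ (by positivity)
                apply mul_le_mul hPoly
                  (mul_le_mul_of_nonneg_right hExp (Real.exp_nonneg _))
                  (by positivity) (by positivity)
            _ = 2 * 2 ^ |a₁| * C₂ * Real.exp (b₁ * ‖x‖ + -(b' * ‖x‖)) := by
                rw [Real.exp_add]; ring
            _ ≤ 2 * 2 ^ |a₁| * C₂ * Real.exp (-(δ * ‖x‖)) := by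
                apply mul_le_mul_of_nonneg_left _ (by positivity)
                apply Real.exp_le_exp.mpr
                have hx0 := norm_nonneg x
                have e1 : b' * ‖x‖ = b₁ * ‖x‖ + ε * ‖x‖ := by rw [hb'def]; ring
                have e2 : δ * ‖x‖ = (ε/2) * ‖x‖ := by rw [hδdef]
                have e3 : 0 ≤ ε * ‖x‖ := by positivity
                nlinarith [e1, e2, e3]
            _ ≤ (2 * 2 ^ |a₁| * C₂ + C₁ * C₂) * Real.exp (-(δ * ‖x‖)) := by
                apply mul_le_mul_of_nonneg_right _ (Real.exp_nonneg _)
                nlinarith [hC₁pos, hC₂pos]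
        · -- tail region
          have hW₁b : W₁ (x + R • e₀) ≤ C₁ * Real.exp (-(b'' * s)) := hC₁ _
          have hW₂b := hC₂ x
          have hRa : R ^ a₁ * Real.exp (-(ε/8) * R) ≤ 1 := hT₁ R hRT₁
          have hExpB : Real.exp (-(b'' * s)) * Real.exp (-(b' * ‖x‖)) * Real.exp (b₁ * R)
              ≤ Real.exp (-(ε/8) * R) * Real.exp (-(δ * ‖x‖)) := by
            rw [← Real.exp_add, ← Real.exp_add, ← Real.exp_add]
            apply Real.exp_le_exp.mpr
            have h1 : b'' * (R - ‖x‖) ≤ b'' * s := mul_le_mul_of_nonneg_left hsl hb''1.le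
            have e1 : b'' * R = b₁ * R - (ε/4) * R := by rw [hb''def]; ring
            have e2 : b'' * ‖x‖ = b₁ * ‖x‖ - (ε/4) * ‖x‖ := by rw [hb''def]; ring
            have e3 : b' * ‖x‖ = b₁ * ‖x‖ + ε * ‖x‖ := by rw [hb'def]; ring
            have e4 : δ * ‖x‖ = (ε/2) * ‖x‖ := by rw [hδdef]
            have e5 : ε * (R/2) ≤ ε * ‖x‖ := mul_le_mul_of_nonneg_left hx.le hε.le
            have e6 : b'' * (R - ‖x‖) = b'' * R - b'' * ‖x‖ := by ring
            linarith [h1, e1, e2, e3, e4, e5, e6]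
          calc W₁ (x + R • e₀) * W₂ x * (Real.exp (b₁ * R) * R ^ a₁)
              ≤ (C₁ * Real.exp (-(b'' * s))) * (C₂ * Real.exp (-(b' * ‖x‖))) *
                  (Real.exp (b₁ * R) * R ^ a₁) := by
                apply mul_le_mul_of_nonneg_right _ (by positivity)
                exact mul_le_mul hW₁b hW₂b (hW₂pos x).le (by positivity)
            _ = (Real.exp (-(b'' * s)) * Real.exp (-(b' * ‖x‖)) * Real.exp (b₁ * R)) *
                  (C₁ * C₂ * R ^ a₁) := by ring
            _ ≤ (Real.exp (-(ε/8) * R) * Real.exp (-(δ * ‖x‖))) * (C₁ * C₂ * R ^ a₁) := by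
                apply mul_le_mul_of_nonneg_right hExpB (by positivity)
            _ = (C₁ * C₂) * ((R ^ a₁ * Real.exp (-(ε/8) * R)) * Real.exp (-(δ * ‖x‖))) := by
                ring
            _ ≤ (C₁ * C₂) * (1 * Real.exp (-(δ * ‖x‖))) := by
                apply mul_le_mul_of_nonneg_left _ (by positivity)
                exact mul_le_mul_of_nonneg_right hRa (Real.exp_nonneg _)
            _ ≤ (2 * 2 ^ |a₁| * C₂ + C₁ * C₂) * Real.exp (-(δ * ‖x‖)) := by
                rw [one_mul]
                apply mul_le_mul_of_nonneg_right _ (Real.exp_nonneg _)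
                nlinarith [hpow2, hC₂pos]
      · exact (aux_integrable_exp hδ).const_mul _
      · apply ae_of_all
        intro x
        have h := (aux_pointwise hasymp₁ e₀ he₀ x).mul_const (W₂ x)
        refine h.congr fun R => ?_
        rw [div_mul_eq_mul_div]
    refine hconv.congr fun R => ?_
    exact integral_div _ _
  have hcomp := hmain.comp (tendsto_norm_cocompact_atTop
    (E := EuclideanSpace ℝ (Fin n)))
  refine hcomp.congr fun ζ => ?_
  simp only [Function.comp]
  rw [aux_rotate hW₁rad hW₂rad e₀ he₀ ζ]
end

section
/- Let σ > 0 and k ≥ 2. Then Σ_{h=2}^k e^{-σρ·2sin(π(h-1)/k)} ≤ C e^{-2σρ sin(π/k)} for all ρ ≥ r k log k with r > 1/(σπ), where C is independent of k and ρ. -/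
open Real

set_option maxHeartbeats 1000000 in
/-- The nearest-neighbour interaction dominates: for `σ > 0` and `r > 1/(σπ)`,
there is `C > 0` independent of `k` and `ρ` such that for `k ≥ 2` and
`ρ ≥ r k log k`,
`Σ_{h=2}^k e^{-σρ·2 sin(π(h-1)/k)} ≤ C e^{-2σρ sin(π/k)}`. -/
theorem stmt16 (σ r : ℝ) (hσ : 0 < σ) (hr : 1 / (σ * π) < r) :
    ∃ C > 0, ∀ k : ℕ, 2 ≤ k → ∀ ρ : ℝ, r * k * Real.log k ≤ ρ →
      ∑ h ∈ Finset.Icc 2 k,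
          Real.exp (-(σ * ρ * (2 * Real.sin (π * ((h : ℝ) - 1) / k)))) ≤
        C * Real.exp (-(2 * σ * ρ * Real.sin (π / k))) := by
  have hπ := Real.pi_pos
  have hr0 : 0 < r := lt_trans (by positivity) hr
  have h4π : 0 < 4 - π := by have := Real.pi_lt_d2; linarith
  have hlog2 : 0 < Real.log 2 := Real.log_pos (by norm_num)
  set c : ℝ := σ * r * (4 - π) * Real.log 2 with hc
  have hc0 : 0 < c := by positivity
  set q : ℝ := Real.exp (-c) with hqdef
  have hq0 : 0 < q := Real.exp_pos _
  have hq1 : q < 1 := by rw [hqdef, Real.exp_lt_one_iff]; linarith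
  have h1q : 0 < 1 - q := by linarith
  refine ⟨2 / (1 - q), by positivity, ?_⟩
  intro k hk ρ hρ
  have hk0 : 0 < (k : ℝ) := by positivity
  have hk2 : (2 : ℝ) ≤ (k : ℝ) := by exact_mod_cast hk
  have hlogk : Real.log 2 ≤ Real.log k := Real.log_le_log (by norm_num) hk2
  have hlogk0 : 0 < Real.log k := lt_of_lt_of_le hlog2 hlogk
  have hρ0 : 0 ≤ ρ := le_trans (by positivity) hρ
  have hA : 0 ≤ σ * ρ := mul_nonneg hσ.le hρ0
  have hkey : c ≤ σ * ρ * (4 - π) / k := by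
    rw [le_div_iff₀ hk0]
    have h1 : σ * (4 - π) * (r * k * Real.log k) ≤ σ * (4 - π) * ρ :=
      mul_le_mul_of_nonneg_left hρ (by positivity)
    have h2 : σ * r * (4 - π) * Real.log 2 * k ≤ σ * r * (4 - π) * Real.log k * k := by
      have := mul_le_mul_of_nonneg_left hlogk (show (0:ℝ) ≤ σ * r * (4 - π) by positivity)
      nlinarith
    nlinarith
  set E : ℝ := Real.exp (-(2 * σ * ρ * Real.sin (π / k))) with hE
  have hE0 : 0 ≤ E := (Real.exp_pos _).le
  have key : ∀ h ∈ Finset.Icc 2 k,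
      Real.exp (-(σ * ρ * (2 * Real.sin (π * ((h : ℝ) - 1) / k)))) ≤
        E * (q ^ (h - 2) + q ^ (k - h)) := by
    intro h hh
    simp only [Finset.mem_Icc] at hh
    obtain ⟨hh2, hhk⟩ := hh
    set j : ℕ := h - 1 with hj
    have hcast : (h : ℝ) - 1 = (j : ℝ) := by
      rw [hj, Nat.cast_sub (by omega)]; simp
    set m : ℕ := min j (k - j) with hm
    have hm1 : 1 ≤ m := by omega
    have h2m : 2 * m ≤ k := by omega
    have hm1' : (1 : ℝ) ≤ (m : ℝ) := by exact_mod_cast hm1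
    have h2m' : 2 * (m : ℝ) ≤ (k : ℝ) := by exact_mod_cast h2m
    have hsin_eq : Real.sin (π * (j : ℝ) / k) = Real.sin (π * (m : ℝ) / k) := by
      rcases le_total j (k - j) with hle | hle
      · rw [hm, min_eq_left hle]
      · rw [hm, min_eq_right hle]
        have hjk' : j ≤ k := by omega
        have e1 : ((k - j : ℕ) : ℝ) = (k : ℝ) - (j : ℝ) := by
          rw [Nat.cast_sub hjk']
        rw [e1]
        have e2 : π * ((k : ℝ) - (j : ℝ)) / k = π - π * (j : ℝ) / k := by
          field_simp
        rw [e2, Real.sin_pi_sub]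
    have hmk2 : π * (m : ℝ) / k ≤ π / 2 := by
      rw [div_le_div_iff₀ hk0 (by norm_num : (0:ℝ) < 2)]
      linarith [mul_le_mul_of_nonneg_left h2m' hπ.le]
    have hpk : 0 < π / k := by positivity
    have hpk2 : π / k ≤ π / 2 := by
      rw [div_le_div_iff₀ hk0 (by norm_num : (0:ℝ) < 2)]
      linarith [mul_le_mul_of_nonneg_left hk2 hπ.le]
    have hsin1 : Real.sin (π / k) ≤ Real.sin (π * (m : ℝ) / k) := by
      apply Real.sin_le_sin_of_le_of_le_pi_div_two (by linarith) hmk2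
      gcongr
      linarith [mul_le_mul_of_nonneg_left hm1' hπ.le]
    have hsin2 : 2 * (m : ℝ) / k ≤ Real.sin (π * (m : ℝ) / k) := by
      have hj2 := Real.mul_le_sin (x := π * (m : ℝ) / k) (by positivity) hmk2
      have : 2 * (m : ℝ) / k = 2 / π * (π * (m : ℝ) / k) := by
        field_simp
      linarith [this ▸ hj2]
    have hsin3 : Real.sin (π / k) ≤ π / k := Real.sin_le hpk.le
    have hmain : Real.exp (-(σ * ρ * (2 * Real.sin (π * ((h : ℝ) - 1) / k)))) ≤
        E * q ^ (m - 1) := by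
      rw [hcast, hE, hqdef, ← Real.exp_nat_mul, ← Real.exp_add, Real.exp_le_exp, hsin_eq]
      have hmm : ((m - 1 : ℕ) : ℝ) = (m : ℝ) - 1 := by
        rw [Nat.cast_sub hm1]; simp
      rw [hmm]
      rcases eq_or_lt_of_le hm1 with hm1e | hm2
      · -- m = 1
        rw [← hm1e]
        simp only [Nat.cast_one, mul_one, sub_self, zero_mul, add_zero]
        linarith
      · have hm2' : (2 : ℝ) ≤ (m : ℝ) := by exact_mod_cast hm2
        have step1 : c * ((m : ℝ) - 1) ≤ σ * ρ * (4 - π) / k * ((m : ℝ) - 1) :=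
          mul_le_mul_of_nonneg_right hkey (by linarith)
        have step2 : 2 * (σ * ρ) * Real.sin (π / k) ≤ 2 * (σ * ρ) * (π / k) :=
          mul_le_mul_of_nonneg_left hsin3 (by positivity)
        have step3 : 2 * (σ * ρ) * (2 * (m : ℝ) / k) ≤
            2 * (σ * ρ) * Real.sin (π * (m : ℝ) / k) :=
          mul_le_mul_of_nonneg_left hsin2 (by positivity)
        have hAk : 0 ≤ σ * ρ / k := by positivity
        have hfinal : 2 * (σ * ρ) * (π / k) + σ * ρ * (4 - π) / k * ((m : ℝ) - 1) ≤
            2 * (σ * ρ) * (2 * (m : ℝ) / k) := by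
          have hpos : 0 ≤ σ * ρ / k * (π * (m : ℝ) - 3 * π + 4) :=
            mul_nonneg hAk (by linarith [mul_le_mul_of_nonneg_left hm2' hπ.le])
          have : 2 * (σ * ρ) * (π / k) + σ * ρ * (4 - π) / k * ((m : ℝ) - 1) -
              2 * (σ * ρ) * (2 * (m : ℝ) / k) = -(σ * ρ / k * (π * (m : ℝ) - 3 * π + 4)) := by
            ring
          linarith [this]
        linarith
    have hqle : q ^ (m - 1) ≤ q ^ (h - 2) + q ^ (k - h) := by
      rcases le_total (h - 2) (k - h) with hle | hle
      · have : q ^ (m - 1) = q ^ (h - 2) := by congr 1; omega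
        rw [this]
        linarith [pow_nonneg hq0.le (k - h)]
      · have : q ^ (m - 1) = q ^ (k - h) := by congr 1; omega
        rw [this]
        linarith [pow_nonneg hq0.le (h - 2)]
    calc Real.exp (-(σ * ρ * (2 * Real.sin (π * ((h : ℝ) - 1) / k)))) ≤ E * q ^ (m - 1) :=
          hmain
      _ ≤ E * (q ^ (h - 2) + q ^ (k - h)) := by
          exact mul_le_mul_of_nonneg_left hqle hE0
  have geomBound : ∀ n : ℕ, ∑ i ∈ Finset.range n, q ^ i ≤ 1 / (1 - q) := by
    intro n
    rw [geom_sum_eq hq1.ne n]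
    have e : (q ^ n - 1) / (q - 1) = (1 - q ^ n) / (1 - q) := by
      rw [← neg_div_neg_eq]; congr 1 <;> ring
    rw [e]
    have hpow : 0 ≤ q ^ n := pow_nonneg hq0.le n
    gcongr
    linarith
  have s1 : ∑ h ∈ Finset.Icc 2 k, q ^ (h - 2) = ∑ i ∈ Finset.range (k - 1), q ^ i := by
    rw [← Finset.Ico_add_one_right_eq_Icc, Finset.sum_Ico_eq_sum_range,
      show k + 1 - 2 = k - 1 from by omega]
    exact Finset.sum_congr rfl fun i _ => by congr 1; omega
  have s2 : ∑ h ∈ Finset.Icc 2 k, q ^ (k - h) = ∑ i ∈ Finset.range (k - 1), q ^ i := by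
    rw [← Finset.Ico_add_one_right_eq_Icc, Finset.sum_Ico_eq_sum_range,
      show k + 1 - 2 = k - 1 from by omega,
      ← Finset.sum_range_reflect (fun i => q ^ i) (k - 1)]
    apply Finset.sum_congr rfl
    intro i hi
    simp only [Finset.mem_range] at hi
    congr 1; omega
  calc ∑ h ∈ Finset.Icc 2 k,
        Real.exp (-(σ * ρ * (2 * Real.sin (π * ((h : ℝ) - 1) / k)))) ≤
      ∑ h ∈ Finset.Icc 2 k, E * (q ^ (h - 2) + q ^ (k - h)) := Finset.sum_le_sum key
    _ = E * ((∑ i ∈ Finset.range (k - 1), q ^ i) + ∑ i ∈ Finset.range (k - 1), q ^ i) := by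
        rw [← Finset.mul_sum, Finset.sum_add_distrib, s1, s2]
    _ ≤ E * (1 / (1 - q) + 1 / (1 - q)) := by
        have := geomBound (k - 1)
        nlinarith [hE0]
    _ = 2 / (1 - q) * E := by ring
end
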